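/- Post's conditions are equivalent to derivability: for a normal system S = (w,P), there exist rules with words α_{i_1},...,α_{i_k} and β_{i_1},...,β_{i_k} (from rules of P) satisfying w β_{i_1} ⋯ β_{i_k} = α_{i_1} ⋯ α_{i_k} u and the length conditions |w β_{i_1} ⋯ β_{i_{j-1}}| ≥ |α_{i_1} ⋯ α_{i_j}| for all j = 1,...,k, if and only if there exist intermediate words x_1,...,x_k with w = α_{i_1} x_1, x_j β_{i_j} = α_{i_{j+1}} x_{j+1} for 1 ≤ j < k, and x_k β_{i_k} = u. -/
import Mathlib


/-- The binary alphabet `A = {a, b}`. -/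
inductive AB | a | b
deriving DecidableEq


private lemma fmr_succ (f : ℕ → List AB) (n : ℕ) :
    (List.range (n+1)).flatMap f = (List.range n).flatMap f ++ f n := by
  simp [List.range_succ]

private lemma fmr_prefix (f : ℕ → List AB) {m n : ℕ} (h : m ≤ n) :
    (List.range m).flatMap f <+: (List.range n).flatMap f := by
  obtain ⟨d, rfl⟩ := Nat.exists_eq_add_of_le h
  rw [List.range_add, List.flatMap_append]
  exact ⟨_, rfl⟩


/-- One derivation step of a normal system with rule set `P`:
`u → v` if there is a rule `α X ↦ X β` in `P` (represented as the pair
`(α, β)`) and a word `x` with `u = α x` and `v = x β`. -/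
def Step (P : List (List AB × List AB)) (u v : List AB) : Prop :=
  ∃ p ∈ P, ∃ x : List AB, u = p.1 ++ x ∧ v = x ++ p.2

theorem post_conditions_iff_derivation (k : ℕ) (hk : 1 ≤ k)
    (α β : ℕ → List AB) (w u : List AB)
    (hw : w ≠ []) (hu : u ≠ [])
    (hαβ : ∀ j, j < k → α j ≠ [] ∧ β j ≠ []) :
    (w ++ (List.range k).flatMap β = (List.range k).flatMap α ++ u ∧
      ∀ j, 1 ≤ j → j ≤ k →
        ((List.range j).map (fun i => (α i).length)).sum ≤
          w.length + ((List.range (j - 1)).map (fun i => (β i).length)).sum)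
    ↔
    (∃ x : ℕ → List AB,
      w = α 0 ++ x 0 ∧
      (∀ j, j + 1 < k → x j ++ β j = α (j + 1) ++ x (j + 1)) ∧
      x (k - 1) ++ β (k - 1) = u) := by
  have hk1 : k - 1 + 1 = k := Nat.succ_pred_eq_of_pos hk
  set A : ℕ → List AB := fun j => (List.range j).flatMap α with hA
  set B : ℕ → List AB := fun j => (List.range j).flatMap β with hB
  have hAs : ∀ j, A (j+1) = A j ++ α j := fun j => fmr_succ α j
  have hBs : ∀ j, B (j+1) = B j ++ β j := fun j => fmr_succ β j
  have hB0 : B 0 = [] := rfl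
  have hA1 : A 1 = α 0 := by
    rw [show (1:ℕ) = 0 + 1 from rfl, hAs, show A 0 = [] from rfl, List.nil_append]
  have hlenA : ∀ j, (A j).length = ((List.range j).map (fun i => (α i).length)).sum := by
    intro j; simp [hA, List.length_flatMap, Function.comp_def]
  have hlenB : ∀ j, (B j).length = ((List.range j).map (fun i => (β i).length)).sum := by
    intro j; simp [hB, List.length_flatMap, Function.comp_def]
  constructor
  · rintro ⟨heq, hlen⟩
    have hlen' : ∀ j, 1 ≤ j → j ≤ k → (A j).length ≤ w.length + (B (j-1)).length := by
      intro j h1 h2; rw [hlenA, hlenB]; exact hlen j h1 h2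
    set y : ℕ → List AB := fun j => (w ++ B j).drop (A (j+1)).length with hy
    have hinv : ∀ j, j < k → w ++ B j = A (j+1) ++ y j := by
      intro j hj
      refine (List.prefix_iff_eq_append.mp ?_).symm
      refine List.prefix_of_prefix_length_le (l₃ := w ++ B k) ?_ ?_ ?_
      · calc A (j+1) <+: A k := fmr_prefix α hj
          _ <+: A k ++ u := ⟨u, rfl⟩
          _ = w ++ B k := heq.symm
      · obtain ⟨t, ht⟩ := fmr_prefix β (le_of_lt hj)
        exact ⟨t, by rw [List.append_assoc]; show w ++ (B j ++ t) = w ++ B k; rw [ht]⟩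
      · have h := hlen' (j+1) (Nat.le_add_left 1 j) hj
        simp only [Nat.add_sub_cancel] at h
        simp only [List.length_append]
        omega
    refine ⟨y, ?_, ?_, ?_⟩
    · have h0 := hinv 0 hk
      rw [hB0, hA1, List.append_nil] at h0
      exact h0
    · intro j hj
      have h1 := hinv j (Nat.lt_of_succ_lt hj)
      have h2 := hinv (j+1) hj
      apply List.append_cancel_left (as := A (j+1))
      calc A (j+1) ++ (y j ++ β j) = (w ++ B j) ++ β j := by
            rw [← List.append_assoc, ← h1]
        _ = w ++ B (j+1) := by rw [hBs, List.append_assoc]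
        _ = A (j+2) ++ y (j+1) := h2
        _ = A (j+1) ++ (α (j+1) ++ y (j+1)) := by rw [hAs (j+1), List.append_assoc]
    · have h1 := hinv (k-1) (Nat.sub_lt hk Nat.one_pos)
      rw [hk1] at h1
      apply List.append_cancel_left (as := A k)
      calc A k ++ (y (k-1) ++ β (k-1)) = (w ++ B (k-1)) ++ β (k-1) := by
            rw [← List.append_assoc, ← h1]
        _ = w ++ B (k-1+1) := by rw [hBs, List.append_assoc]
        _ = A k ++ u := by rw [hk1]; exact heq
  · rintro ⟨x, h0, hstep, hlast⟩
    have hinv : ∀ j, j < k → w ++ B j = A (j+1) ++ x j := by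
      intro j
      induction j with
      | zero => intro _; rw [hB0, hA1, List.append_nil]; exact h0
      | succ j ih =>
        intro hj
        have hj' := Nat.lt_of_succ_lt hj
        calc w ++ B (j+1) = (w ++ B j) ++ β j := by rw [hBs, List.append_assoc]
          _ = A (j+1) ++ (x j ++ β j) := by rw [ih hj', List.append_assoc]
          _ = A (j+1) ++ (α (j+1) ++ x (j+1)) := by rw [hstep j hj]
          _ = A (j+2) ++ x (j+1) := by rw [hAs (j+1), List.append_assoc]
    have hlastinv := hinv (k-1) (Nat.sub_lt hk Nat.one_pos)
    rw [hk1] at hlastinv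
    constructor
    · calc w ++ B k = (w ++ B (k-1)) ++ β (k-1) := by
            conv_lhs => rw [← hk1, hBs]
            rw [List.append_assoc]
        _ = A k ++ (x (k-1) ++ β (k-1)) := by rw [hlastinv, List.append_assoc]
        _ = A k ++ u := by rw [hlast]
    · intro j h1 h2
      rw [← hlenA, ← hlenB]
      have hj1 : j - 1 + 1 = j := Nat.succ_pred_eq_of_pos h1
      have h := hinv (j-1) (by omega)
      rw [hj1] at h
      have h' := congrArg List.length h
      simp only [List.length_append] at h'
      omega
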